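/- Let Z be a nontrivial commutative ring with unity of characteristic p > 0, and let n be a positive integer with n ≡ 0 (mod p). Then the element g = x + x² of J(Z) has no root of order n: there is no ω ∈ J(Z) with ω^[n] = x + x². In particular J(Z) is not algebraically complete. -/

import Mathlib

open PowerSeries Finset

/-- Composition `f ∘ g` of formal power series (substitution of `g` into `f`).
This coefficientwise formula agrees with the usual substitution whenever the
constant coefficient of `g` is zero, since then `g ^ j` has order at least `j`. -/
noncomputable def psComp {Z : Type*} [CommRing Z] (f g : Z⟦X⟧) : Z⟦X⟧ :=
  PowerSeries.mk fun n => ∑ j ∈ Finset.range (n + 1), coeff (R := Z) j f * coeff (R := Z) n (g ^ j)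

/-- The `m`-th compositional iterate: `ω^[0] = X` and `ω^[m+1] = ω ∘ ω^[m]`. -/
noncomputable def psIter {Z : Type*} [CommRing Z] (ω : Z⟦X⟧) : ℕ → Z⟦X⟧
  | 0 => PowerSeries.X
  | m + 1 => psComp ω (psIter ω m)

/-
The coefficient of `x²` is additive under composition of series in `J(Z)`:
`[x²](f ∘ g) = [x²] f + [x²] g`. Hence `[x²] ω^[n] = n · [x²] ω`, which vanishes when `p ∣ n`,
whereas `[x²](x + x²) = 1 ≠ 0`.
-/

section psComp

variable {Z : Type*} [CommRing Z]

theorem coeff_psComp (f g : Z⟦X⟧) (n : ℕ) :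
    coeff n (psComp f g) = ∑ j ∈ range (n + 1), coeff j f * coeff n (g ^ j) :=
  coeff_mk _ _

theorem constantCoeff_psComp (f g : Z⟦X⟧) :
    constantCoeff (psComp f g) = constantCoeff f := by
  rw [← coeff_zero_eq_constantCoeff_apply, coeff_psComp]
  simp

theorem coeff_one_psComp (f g : Z⟦X⟧) :
    coeff 1 (psComp f g) = coeff 1 f * coeff 1 g := by
  simp [coeff_psComp, sum_range_succ, coeff_one]

theorem coeff_two_pow_two {g : Z⟦X⟧} (hg : constantCoeff g = 0) :
    coeff 2 (g ^ 2) = coeff 1 g ^ 2 := by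
  rw [pow_two, coeff_mul, Nat.sum_antidiagonal_eq_sum_range_succ_mk]
  simp [sum_range_succ, hg, pow_two]

theorem coeff_two_psComp (f : Z⟦X⟧) {g : Z⟦X⟧} (hg : constantCoeff g = 0) :
    coeff 2 (psComp f g) = coeff 1 f * coeff 2 g + coeff 2 f * coeff 1 g ^ 2 := by
  simp [coeff_psComp, sum_range_succ, coeff_one, coeff_two_pow_two hg]

end psComp

section psIter

variable {Z : Type*} [CommRing Z] {ω : Z⟦X⟧}

theorem constantCoeff_psIter (h0 : constantCoeff ω = 0) (m : ℕ) :
    constantCoeff (psIter ω m) = 0 := by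
  cases m with
  | zero => simp [psIter]
  | succ m => rw [psIter, constantCoeff_psComp, h0]

theorem coeff_one_psIter (h1 : coeff 1 ω = 1) (m : ℕ) : coeff 1 (psIter ω m) = 1 := by
  induction m with
  | zero => simp [psIter, coeff_X]
  | succ m ih => rw [psIter, coeff_one_psComp, h1, ih, one_mul]

theorem coeff_two_psIter (h0 : constantCoeff ω = 0) (h1 : coeff 1 ω = 1) (m : ℕ) :
    coeff 2 (psIter ω m) = m * coeff 2 ω := by
  induction m with
  | zero => simp [psIter, coeff_X]
  | succ m ih =>
    rw [psIter, coeff_two_psComp ω (constantCoeff_psIter h0 m), h1, ih,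
      coeff_one_psIter h1 m]
    push_cast
    ring

end psIter

theorem no_root_char_p_general {Z : Type*} [CommRing Z] [Nontrivial Z]
    (p : ℕ) [CharP Z p] (n : ℕ) (hpn : p ∣ n) :
    ¬ ∃ ω : Z⟦X⟧, (constantCoeff (R := Z) ω = 0 ∧ coeff (R := Z) 1 ω = 1) ∧
        psIter ω n = PowerSeries.X + PowerSeries.X ^ 2 := by
  rintro ⟨ω, ⟨h0, h1⟩, hiter⟩
  have h2 := coeff_two_psIter h0 h1 n
  rw [hiter, (CharP.cast_eq_zero_iff Z p n).mpr hpn, zero_mul] at h2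
  simp [coeff_X] at h2

/-- over a nontrivial commutative ring of characteristic `p > 0`, if `p ∣ n`
(`n ≥ 1`) then `g = x + x²` has no iterative root of order `n` in `𝒥(Z)`; in particular
`𝒥(Z)` is not algebraically complete. -/
theorem no_root_char_p {Z : Type*} [CommRing Z] [Nontrivial Z]
    (p : ℕ) [CharP Z p] (hp : 0 < p) (n : ℕ) (hn : 1 ≤ n) (hpn : p ∣ n) :
    ¬ ∃ ω : Z⟦X⟧, (constantCoeff (R := Z) ω = 0 ∧ coeff (R := Z) 1 ω = 1) ∧
        psIter ω n = PowerSeries.X + PowerSeries.X ^ 2 :=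
  no_root_char_p_general p n hpn
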